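/- arXiv:2105.00073 — 4 statements merged into one kernel-verified Lean document; each statement's English description precedes it below -/
import Mathlib

section
/- Let ν be a Lévy measure on ℝ^d with density bounded by C/|z|^{d+σ} for |z| < 1 and σ ∈ (0,2), let r ∈ (0,1), let σ_r be a d×d matrix with σ_r σ_r^T = (1/2)∫_{|z|<r} z z^T dν(z), and let φ ∈ C_b³(ℝ^d). Then |∫_{|z|<r} (φ(x+z) − φ(x) − Dφ(x)·z) dν(z) − tr(σ_r^T D²φ(x) σ_r)| ≤ K r^{3-σ} ‖D³φ‖_∞ for all x ∈ ℝ^d, with K independent of r, x, φ. -/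
/-!
Taylor's formula to second order along the segment from `x` to `x + z` leaves a remainder of size
at most `‖D³φ‖∞ ‖z‖³ / 6`, and by the defining property of `σ_r` the second-order term integrates
exactly to `tr (σ_rᵀ D²φ(x) σ_r)`. It remains to bound the third moment `∫_{|z|<r} |z|³ dν`: the
density bound dominates it by `C ∫_{|z|<r} |z|^(3-d-σ) dz`, which polar coordinates evaluate to
`C d |B₁| r^(3-σ) / (3-σ)`.
-/

open MeasureTheory Metric Set Matrix

section Taylor

variable {F : Type*} [NormedAddCommGroup F] [NormedSpace ℝ F]

theorem norm_le_of_hasDerivAt_of_norm_deriv_le_pow {g g' : ℝ → F} {c : ℝ} {n : ℕ}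
    (hg : ∀ t, HasDerivAt g (g' t) t) (h₀ : g 0 = 0) (hg' : ∀ t, 0 ≤ t → ‖g' t‖ ≤ c * t ^ n)
    {t : ℝ} (ht : 0 ≤ t) : ‖g t‖ ≤ c * t ^ (n + 1) / (n + 1) := by
  have hB : ∀ s, HasDerivAt (fun s : ℝ => c * s ^ (n + 1) / (n + 1)) (c * s ^ n) s := by
    intro s
    refine (((hasDerivAt_pow (n + 1) s).const_mul c).div_const ((n : ℝ) + 1)).congr_deriv ?_
    push_cast
    field_simp
  refine image_norm_le_of_norm_deriv_right_le_deriv_boundary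
    (fun s _ => (hg s).continuousAt.continuousWithinAt) (fun s _ => (hg s).hasDerivWithinAt)
    (by simp [h₀]) (fun s => hB s) (fun s hs => hg' s hs.1) (right_mem_Icc.2 ht)

variable {E : Type*} [NormedAddCommGroup E] [NormedSpace ℝ E]

theorem norm_fderiv_fderiv_sub_le {φ : E → F} (hφ : ContDiff ℝ 3 φ) {M : ℝ}
    (hM : ∀ y, ‖iteratedFDeriv ℝ 3 φ y‖ ≤ M) (x y : E) :
    ‖fderiv ℝ (fderiv ℝ φ) y - fderiv ℝ (fderiv ℝ φ) x‖ ≤ M * ‖y - x‖ := by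
  have hDφ : ContDiff ℝ 2 (fderiv ℝ φ) := hφ.fderiv_right (by norm_num)
  refine Convex.norm_image_sub_le_of_norm_fderiv_le (𝕜 := ℝ) (f := fderiv ℝ (fderiv ℝ φ))
    (fun z _ => ?_) (fun z _ => ?_) convex_univ (mem_univ x) (mem_univ y)
  · exact (hDφ.fderiv_right (m := 1) (by norm_num)).differentiable (by norm_num) z
  · simpa only [← norm_iteratedFDeriv_fderiv, norm_iteratedFDeriv_zero] using hM z

theorem norm_taylor_two_remainder_le {φ : E → F} (hφ : ContDiff ℝ 3 φ) {M : ℝ}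
    (hM : ∀ y, ‖iteratedFDeriv ℝ 3 φ y‖ ≤ M) (x z : E) :
    ‖φ (x + z) - φ x - fderiv ℝ φ x z - (1 / 2 : ℝ) • fderiv ℝ (fderiv ℝ φ) x z z‖
      ≤ M / 6 * ‖z‖ ^ 3 := by
  set φ₂ := fderiv ℝ (fderiv ℝ φ)
  have hφ₁ : Differentiable ℝ φ := hφ.differentiable (by norm_num)
  have hDφ : Differentiable ℝ (fderiv ℝ φ) :=
    (hφ.fderiv_right (m := 2) (by norm_num)).differentiable (by norm_num)
  have hline : ∀ t : ℝ, HasDerivAt (fun t : ℝ => x + t • z) z t := fun t => by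
    simpa using ((hasDerivAt_id t).smul_const z).const_add x
  -- `R₂ t` is the second-order Taylor remainder at `x + t • z`; `R₂' = R₁` and `R₁' = O(t)` by
  -- the Lipschitz bound on `D²φ`, so integrating twice from `0` gives the cubic bound.
  set R₁ : ℝ → F := fun t => fderiv ℝ φ (x + t • z) z - fderiv ℝ φ x z - t • φ₂ x z z
  have hR₁ : ∀ t, HasDerivAt R₁ (φ₂ (x + t • z) z z - φ₂ x z z) t := fun t => by
    have hDφt := ((hDφ _).hasFDerivAt.comp_hasDerivAt t (hline t)).clm_apply (hasDerivAt_const t z)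
    convert (hDφt.sub_const (fderiv ℝ φ x z)).sub ((hasDerivAt_id t).smul_const (φ₂ x z z)) using 1
    · rfl
    · simp [φ₂]
  have hR₁' : ∀ t, 0 ≤ t → ‖φ₂ (x + t • z) z z - φ₂ x z z‖ ≤ M * ‖z‖ ^ 3 * t ^ 1 := fun t ht =>
    calc ‖φ₂ (x + t • z) z z - φ₂ x z z‖ = ‖(φ₂ (x + t • z) - φ₂ x) z z‖ := by simp
      _ ≤ ‖φ₂ (x + t • z) - φ₂ x‖ * ‖z‖ * ‖z‖ := (φ₂ (x + t • z) - φ₂ x).le_opNorm₂ z z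
      _ ≤ M * ‖t • z‖ * ‖z‖ * ‖z‖ := by
          gcongr
          simpa using norm_fderiv_fderiv_sub_le hφ hM x (x + t • z)
      _ = M * ‖z‖ ^ 3 * t ^ 1 := by rw [norm_smul, Real.norm_of_nonneg ht]; ring
  set R₂ : ℝ → F := fun t => φ (x + t • z) - φ x - t • fderiv ℝ φ x z - (t ^ 2 / 2) • φ₂ x z z
  have hR₂ : ∀ t, HasDerivAt R₂ (R₁ t) t := fun t => by
    have hφt := (hφ₁ _).hasFDerivAt.comp_hasDerivAt t (hline t)
    convert ((hφt.sub_const (φ x)).sub ((hasDerivAt_id t).smul_const (fderiv ℝ φ x z))).sub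
      (((hasDerivAt_pow 2 t).div_const 2).smul_const (φ₂ x z z)) using 1
    · rfl
    · simp [R₁]
  have hR₂' : ∀ t, 0 ≤ t → ‖R₁ t‖ ≤ M * ‖z‖ ^ 3 / 2 * t ^ 2 := fun t ht => by
    have := norm_le_of_hasDerivAt_of_norm_deriv_le_pow hR₁ (by simp [R₁]) hR₁' ht
    norm_num at this ⊢
    linarith
  have := norm_le_of_hasDerivAt_of_norm_deriv_le_pow hR₂ (by simp [R₂]) hR₂' zero_le_one
  norm_num [R₂] at this ⊢
  linarith

end Taylor

theorem setLIntegral_le_setLIntegral_mul_of_le_density {α : Type*} [MeasurableSpace α]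
    {μ ν : Measure α} {ρ : α → ENNReal} (hρ : Measurable ρ) {S : Set α} (hS : MeasurableSet S)
    (hν : ∀ A, MeasurableSet A → A ⊆ S → ν A ≤ ∫⁻ z in A, ρ z ∂μ) (f : α → ENNReal) :
    ∫⁻ z in S, f z ∂ν ≤ ∫⁻ z in S, ρ z * f z ∂μ := by
  have hle : ν.restrict S ≤ (μ.restrict S).withDensity ρ := Measure.le_iff.2 fun A hA => by
    rw [Measure.restrict_apply hA, withDensity_apply _ hA, Measure.restrict_restrict hA]
    exact hν _ (hA.inter hS) inter_subset_right
  exact (lintegral_mono' hle le_rfl).trans (lintegral_withDensity_le_lintegral_mul _ hρ f)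

theorem integral_rpow_Ioo_zero {β r : ℝ} (hβ : -1 < β) (hr : 0 ≤ r) :
    ∫ y in Ioo 0 r, y ^ β = r ^ (β + 1) / (β + 1) := by
  rw [← integral_Ioc_eq_integral_Ioo, ← intervalIntegral.integral_of_le hr,
    integral_rpow (Or.inl hβ), Real.zero_rpow (by linarith), sub_zero]

section Moments

variable {E : Type*} [NormedAddCommGroup E] [NormedSpace ℝ E] [FiniteDimensional ℝ E]
  [MeasurableSpace E] [BorelSpace E] (μ : Measure E) [μ.IsAddHaarMeasure]

local notation "n" => Module.finrank ℝ E

theorem integral_ball_norm_rpow_neg [Nontrivial E] {α r : ℝ} (hα : α < n) (hr : 0 ≤ r) :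
    ∫ z in ball (0 : E) r, ‖z‖ ^ (-α) ∂μ = n * μ.real (ball 0 1) * (r ^ (n - α) / (n - α)) := by
  have hradial : (ball (0 : E) r).indicator (fun z => ‖z‖ ^ (-α))
      = fun z => (Iio r).indicator (fun y : ℝ => y ^ (-α)) ‖z‖ := by
    ext z
    simp [indicator]
  have hcut : (fun y : ℝ => y ^ (n - 1) • (Iio r).indicator (fun y => y ^ (-α)) y)
      = (Iio r).indicator (fun y => y ^ (n - 1) * y ^ (-α)) := by
    ext y
    simp [indicator_mul_right]
  have hpow : EqOn (fun y : ℝ => y ^ (n - 1) * y ^ (-α)) (fun y => y ^ ((n : ℝ) - 1 - α))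
      (Ioi 0 ∩ Iio r) := fun y hy => by
    dsimp only
    rw [← Real.rpow_natCast, ← Real.rpow_add hy.1, Nat.cast_sub Module.finrank_pos]
    ring_nf
  rw [← integral_indicator measurableSet_ball, hradial, integral_fun_norm_addHaar, hcut,
    setIntegral_indicator measurableSet_Iio,
    setIntegral_congr_fun (measurableSet_Ioi.inter measurableSet_Iio) hpow, Ioi_inter_Iio,
    integral_rpow_Ioo_zero (by linarith) hr, nsmul_eq_mul, smul_eq_mul]
  ring_nf

theorem lintegral_ball_norm_pow_le {ν : Measure E} {C σ r : ℝ} {k : ℕ} (hC : 0 ≤ C) (hk : k ≠ 0)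
    (hσk : σ < k) (hr₀ : 0 ≤ r) (hr₁ : r ≤ 1)
    (hdens : ∀ A, MeasurableSet A → A ⊆ ball 0 1 →
      ν A ≤ ∫⁻ z in A, ENNReal.ofReal (C / ‖z‖ ^ ((n : ℝ) + σ)) ∂μ) :
    ∫⁻ z in ball (0 : E) r, ENNReal.ofReal (‖z‖ ^ k) ∂ν
      ≤ ENNReal.ofReal (C * (n * μ.real (ball 0 1) * (r ^ (k - σ) / (k - σ)))) := by
  rcases subsingleton_or_nontrivial E with hE | hE
  · simp [Subsingleton.elim _ (0 : E), hk]
  set α : ℝ := n + σ - k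
  have hball : ∀ A, MeasurableSet A → A ⊆ ball (0 : E) r →
      ν A ≤ ∫⁻ z in A, ENNReal.ofReal (C / ‖z‖ ^ ((n : ℝ) + σ)) ∂μ :=
    fun A hA hAr => hdens A hA (hAr.trans (ball_subset_ball hr₁))
  have hpoint : ∀ z : E, ENNReal.ofReal (C / ‖z‖ ^ ((n : ℝ) + σ)) * ENNReal.ofReal (‖z‖ ^ k)
      ≤ ENNReal.ofReal (C * ‖z‖ ^ (-α)) := fun z => by
    rcases eq_or_ne z 0 with rfl | hz
    · simp [hk]
    rw [← ENNReal.ofReal_mul (by positivity), neg_sub, Real.rpow_sub (norm_pos_iff.2 hz),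
      Real.rpow_natCast, div_mul_eq_mul_div, mul_div_assoc]
  have hint : IntegrableOn (fun z : E => C * ‖z‖ ^ (-α)) (ball 0 r) μ :=
    integrableOn_ball_of_norm_le_rpow (α := α) Module.finrank_pos (by linarith)
      (Filter.Eventually.of_forall fun z => by rw [Real.norm_of_nonneg (by positivity)])
      ((measurable_norm.pow_const _).const_mul C).aestronglyMeasurable
  calc ∫⁻ z in ball (0 : E) r, ENNReal.ofReal (‖z‖ ^ k) ∂ν
      ≤ ∫⁻ z in ball (0 : E) r,
          ENNReal.ofReal (C / ‖z‖ ^ ((n : ℝ) + σ)) * ENNReal.ofReal (‖z‖ ^ k) ∂μ :=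
        setLIntegral_le_setLIntegral_mul_of_le_density (by fun_prop) measurableSet_ball hball _
    _ ≤ ∫⁻ z in ball (0 : E) r, ENNReal.ofReal (C * ‖z‖ ^ (-α)) ∂μ := lintegral_mono hpoint
    _ = ENNReal.ofReal (∫ z in ball (0 : E) r, C * ‖z‖ ^ (-α) ∂μ) :=
        (ofReal_integral_eq_lintegral_ofReal hint
          (Filter.Eventually.of_forall fun z => by positivity)).symm
    _ = _ := by
        have hexp : (n : ℝ) - α = k - σ := by ring
        rw [integral_const_mul, integral_ball_norm_rpow_neg μ (by linarith) hr₀, hexp]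

theorem integrableOn_ball_norm_pow {ν : Measure E} {C σ r : ℝ} {k : ℕ} (hC : 0 ≤ C) (hk : k ≠ 0)
    (hσk : σ < k) (hr₀ : 0 ≤ r) (hr₁ : r ≤ 1)
    (hdens : ∀ A, MeasurableSet A → A ⊆ ball 0 1 →
      ν A ≤ ∫⁻ z in A, ENNReal.ofReal (C / ‖z‖ ^ ((n : ℝ) + σ)) ∂μ) :
    IntegrableOn (fun z : E => ‖z‖ ^ k) (ball 0 r) ν :=
  ⟨(continuous_norm.pow k).aestronglyMeasurable, (hasFiniteIntegral_iff_ofReal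
    (Filter.Eventually.of_forall fun z => by positivity)).2
    ((lintegral_ball_norm_pow_le μ hC hk hσk hr₀ hr₁ hdens).trans_lt ENNReal.ofReal_lt_top)⟩

theorem setIntegral_ball_norm_pow_le {ν : Measure E} {C σ r : ℝ} {k : ℕ} (hC : 0 ≤ C)
    (hk : k ≠ 0) (hσk : σ < k) (hr₀ : 0 ≤ r) (hr₁ : r ≤ 1)
    (hdens : ∀ A, MeasurableSet A → A ⊆ ball 0 1 →
      ν A ≤ ∫⁻ z in A, ENNReal.ofReal (C / ‖z‖ ^ ((n : ℝ) + σ)) ∂μ) :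
    ∫ z in ball (0 : E) r, ‖z‖ ^ k ∂ν
      ≤ C * (n * μ.real (ball 0 1) * (r ^ (k - σ) / (k - σ))) := by
  rw [integral_eq_lintegral_of_nonneg_ae (f := fun z => ‖z‖ ^ k)
    (Filter.Eventually.of_forall fun z => by positivity)
    (continuous_norm.pow k).aestronglyMeasurable]
  refine ENNReal.toReal_le_of_le_ofReal ?_ (lintegral_ball_norm_pow_le μ hC hk hσk hr₀ hr₁ hdens)
  have : 0 < k - σ := by linarith
  positivity

end Moments

theorem MeasureTheory.Integrable.apply_apply_self {E : Type*} [NormedAddCommGroup E]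
    [NormedSpace ℝ E] [MeasurableSpace E] [OpensMeasurableSpace E] {μ : Measure E}
    (hsq : Integrable (fun z => ‖z‖ ^ 2) μ) (B : E →L[ℝ] E →L[ℝ] ℝ) :
    Integrable (fun z => B z z) μ :=
  (hsq.const_mul ‖B‖).mono'
    (B.continuous₂.comp (continuous_id.prodMk continuous_id)).aestronglyMeasurable
    (Filter.Eventually.of_forall fun z => by simpa [sq, mul_assoc] using B.le_opNorm₂ z z)

theorem norm_integral_taylor_two_sub_le {E : Type*} [NormedAddCommGroup E] [NormedSpace ℝ E]
    [MeasurableSpace E] [OpensMeasurableSpace E] {μ : Measure E}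
    (hsq : Integrable (fun z => ‖z‖ ^ 2) μ) (hcube : Integrable (fun z => ‖z‖ ^ 3) μ)
    {φ : E → ℝ} (hφ : ContDiff ℝ 3 φ) {M : ℝ} (hM : ∀ y, ‖iteratedFDeriv ℝ 3 φ y‖ ≤ M) (x : E) :
    ‖∫ z, (φ (x + z) - φ x - fderiv ℝ φ x z) ∂μ
        - ∫ z, (1 / 2 : ℝ) • fderiv ℝ (fderiv ℝ φ) x z z ∂μ‖
      ≤ M / 6 * ∫ z, ‖z‖ ^ 3 ∂μ := by
  have hrem := norm_taylor_two_remainder_le hφ hM x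
  have hquad : Integrable (fun z => (1 / 2 : ℝ) • fderiv ℝ (fderiv ℝ φ) x z z) μ :=
    (hsq.apply_apply_self _).const_mul (1 / 2 : ℝ)
  have hrem_int : Integrable (fun z => φ (x + z) - φ x - fderiv ℝ φ x z
      - (1 / 2 : ℝ) • fderiv ℝ (fderiv ℝ φ) x z z) μ := by
    have hφc := hφ.continuous
    exact (hcube.const_mul (M / 6)).mono' (by fun_prop) (Filter.Eventually.of_forall hrem)
  have hlin : Integrable (fun z => φ (x + z) - φ x - fderiv ℝ φ x z) μ :=
    (hrem_int.add hquad).congr (Filter.Eventually.of_forall fun z => sub_add_cancel _ _)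
  rw [← integral_sub hlin hquad, ← integral_const_mul]
  exact norm_integral_le_of_norm_le (hcube.const_mul _) (Filter.Eventually.of_forall hrem)

section Euclidean

variable {ι : Type*} [Fintype ι]

theorem EuclideanSpace.apply_apply_self_eq_sum [DecidableEq ι]
    (B : EuclideanSpace ℝ ι →L[ℝ] EuclideanSpace ℝ ι →L[ℝ] ℝ) (z : EuclideanSpace ℝ ι) :
    B z z = ∑ i, ∑ j, z i * z j * B (single i 1) (single j 1) := by
  conv_lhs => rw [← (EuclideanSpace.basisFun ι ℝ).sum_repr z]
  simp only [map_sum, map_smul, _root_.sum_apply, _root_.smul_apply,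
    EuclideanSpace.basisFun_repr, EuclideanSpace.basisFun_apply, smul_eq_mul, Finset.mul_sum]
  rw [Finset.sum_comm]
  exact Finset.sum_congr rfl fun i _ => Finset.sum_congr rfl fun j _ => by ring

theorem EuclideanSpace.integrable_apply_mul_apply {μ : Measure (EuclideanSpace ℝ ι)}
    (hsq : Integrable (fun z => ‖z‖ ^ 2) μ) (i j : ι) : Integrable (fun z => z i * z j) μ :=
  hsq.mono' (by fun_prop) (Filter.Eventually.of_forall fun z => by
    rw [norm_mul, sq]
    exact mul_le_mul (PiLp.norm_apply_le z i) (PiLp.norm_apply_le z j) (norm_nonneg _)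
      (norm_nonneg _))

theorem EuclideanSpace.integral_apply_apply_self [DecidableEq ι]
    {μ : Measure (EuclideanSpace ℝ ι)} (hsq : Integrable (fun z => ‖z‖ ^ 2) μ)
    (B : EuclideanSpace ℝ ι →L[ℝ] EuclideanSpace ℝ ι →L[ℝ] ℝ) :
    ∫ z, B z z ∂μ = ∑ i, ∑ j, B (single i 1) (single j 1) * ∫ z, z i * z j ∂μ := by
  have hint := EuclideanSpace.integrable_apply_mul_apply hsq
  simp_rw [EuclideanSpace.apply_apply_self_eq_sum B]
  rw [integral_finsetSum _ fun i _ => integrable_finsetSum _ fun j _ => (hint i j).mul_const _]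
  refine Finset.sum_congr rfl fun i _ => ?_
  rw [integral_finsetSum _ fun j _ => (hint i j).mul_const _]
  exact Finset.sum_congr rfl fun j _ => by rw [integral_mul_const, mul_comm]

theorem Matrix.trace_transpose_mul_mul_eq_sum (H S : Matrix ι ι ℝ) :
    trace (Sᵀ * H * S) = ∑ i, ∑ j, H i j * (S * Sᵀ) i j := by
  rw [Matrix.mul_assoc, trace_mul_comm, Matrix.mul_assoc]
  simp only [trace, diag, mul_apply, transpose_apply, Finset.mul_sum]
  exact Finset.sum_congr rfl fun i _ => Finset.sum_congr rfl fun j _ =>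
    Finset.sum_congr rfl fun k _ => by ring

theorem EuclideanSpace.trace_transpose_mul_mul_eq_integral [DecidableEq ι]
    {μ : Measure (EuclideanSpace ℝ ι)} (hsq : Integrable (fun z => ‖z‖ ^ 2) μ)
    {S : Matrix ι ι ℝ} (hS : ∀ i j, (S * Sᵀ) i j = 1 / 2 * ∫ z, z i * z j ∂μ)
    (B : EuclideanSpace ℝ ι →L[ℝ] EuclideanSpace ℝ ι →L[ℝ] ℝ) :
    trace (Sᵀ * of (fun i j => B (single i 1) (single j 1)) * S)
      = ∫ z, (1 / 2 : ℝ) • B z z ∂μ := by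
  rw [trace_transpose_mul_mul_eq_sum, integral_smul, integral_apply_apply_self hsq B, smul_eq_mul,
    Finset.mul_sum]
  simp only [hS, of_apply, Finset.mul_sum]
  exact Finset.sum_congr rfl fun i _ => Finset.sum_congr rfl fun j _ => by ring

end Euclidean

theorem stmt2_general (d : ℕ) (ν : Measure (EuclideanSpace ℝ (Fin d)))
    (C σ : ℝ) (hC : 0 < C) (hσ2 : σ < 2)
    (hdens : ∀ A : Set (EuclideanSpace ℝ (Fin d)), MeasurableSet A → A ⊆ ball 0 1 →
      ν A ≤ ∫⁻ z in A, ENNReal.ofReal (C / ‖z‖ ^ ((d : ℝ) + σ)) ∂volume) :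
    ∃ K : ℝ, 0 < K ∧ ∀ r : ℝ, r ∈ Ioo (0 : ℝ) 1 →
      ∀ σr : Matrix (Fin d) (Fin d) ℝ,
      (∀ i j : Fin d, (σr * σr.transpose) i j =
        (1 / 2) * ∫ z in ball (0 : EuclideanSpace ℝ (Fin d)) r,
          (EuclideanSpace.equiv (Fin d) ℝ z i) * (EuclideanSpace.equiv (Fin d) ℝ z j) ∂ν) →
      ∀ φ : EuclideanSpace ℝ (Fin d) → ℝ, ContDiff ℝ 3 φ →
      ∀ M3 : ℝ, (∀ x, ‖iteratedFDeriv ℝ 3 φ x‖ ≤ M3) →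
      ∀ x : EuclideanSpace ℝ (Fin d),
        |(∫ z in ball (0 : EuclideanSpace ℝ (Fin d)) r,
            (φ (x + z) - φ x - fderiv ℝ φ x z) ∂ν)
          - Matrix.trace (σr.transpose *
              (Matrix.of fun i j : Fin d =>
                iteratedFDeriv ℝ 2 φ x
                  ![EuclideanSpace.single i (1 : ℝ), EuclideanSpace.single j (1 : ℝ)]) * σr)|
          ≤ K * r ^ (3 - σ) * M3 := by
  have hdens' : ∀ A, MeasurableSet A → A ⊆ ball 0 1 → ν A ≤ ∫⁻ z in A,
      ENNReal.ofReal (C / ‖z‖ ^ ((Module.finrank ℝ (EuclideanSpace ℝ (Fin d)) : ℝ) + σ)) := by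
    simpa using hdens
  set K₀ := C * (d * volume.real (ball (0 : EuclideanSpace ℝ (Fin d)) 1) / (3 - σ)) / 6
  have hK₀ : 0 ≤ K₀ := by
    have : 0 < 3 - σ := by linarith
    positivity
  refine ⟨K₀ + 1, by positivity, ?_⟩
  rintro r ⟨hr₀, hr₁⟩ σr hσr φ hφ M3 hM3 x
  have hM3₀ : 0 ≤ M3 := (norm_nonneg _).trans (hM3 x)
  have hsq := integrableOn_ball_norm_pow volume hC.le two_ne_zero (by simpa) hr₀.le hr₁.le hdens'
  have hcube := integrableOn_ball_norm_pow volume hC.le three_ne_zero (by norm_num; linarith)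
    hr₀.le hr₁.le hdens'
  have hcube_le := setIntegral_ball_norm_pow_le volume hC.le three_ne_zero (by norm_num; linarith)
    hr₀.le hr₁.le hdens'
  rw [finrank_euclideanSpace_fin, Nat.cast_ofNat] at hcube_le
  have htrace := EuclideanSpace.trace_transpose_mul_mul_eq_integral hsq (S := σr)
    (by simpa using hσr) (fderiv ℝ (fderiv ℝ φ) x)
  calc _ ≤ M3 / 6 * ∫ z in ball 0 r, ‖z‖ ^ 3 ∂ν := by
        simpa [iteratedFDeriv_two_apply, htrace] using
          norm_integral_taylor_two_sub_le hsq hcube hφ hM3 x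
    _ ≤ M3 / 6 * (C * (d * volume.real (ball (0 : EuclideanSpace ℝ (Fin d)) 1)
          * (r ^ (3 - σ) / (3 - σ)))) := by
        gcongr
    _ = K₀ * r ^ (3 - σ) * M3 := by ring
    _ ≤ (K₀ + 1) * r ^ (3 - σ) * M3 := by gcongr; linarith

/-- Small-jump approximation lemma. For a Lévy measure ν with density bounded by
C/|z|^{d+σ} on the unit ball (σ ∈ (0,2)), r ∈ (0,1), a matrix σ_r with
σ_r σ_rᵀ = (1/2)∫_{|z|<r} z zᵀ dν, and φ ∈ C_b³:
|L_r φ(x) − tr(σ_rᵀ D²φ(x) σ_r)| ≤ K r^{3-σ} ‖D³φ‖_∞, with K independent of r, x, φ. -/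
theorem stmt2 (d : ℕ) (ν : Measure (EuclideanSpace ℝ (Fin d)))
    (C σ : ℝ) (hC : 0 < C) (hσ1 : 0 < σ) (hσ2 : σ < 2)
    (hlevy : ∫⁻ z, ENNReal.ofReal (min 1 (‖z‖ ^ 2)) ∂ν < ⊤)
    (hdens : ∀ A : Set (EuclideanSpace ℝ (Fin d)), MeasurableSet A → A ⊆ ball 0 1 →
      ν A ≤ ∫⁻ z in A, ENNReal.ofReal (C / ‖z‖ ^ ((d : ℝ) + σ)) ∂volume) :
    ∃ K : ℝ, 0 < K ∧ ∀ r : ℝ, r ∈ Ioo (0 : ℝ) 1 →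
      ∀ σr : Matrix (Fin d) (Fin d) ℝ,
      (∀ i j : Fin d, (σr * σr.transpose) i j =
        (1 / 2) * ∫ z in ball (0 : EuclideanSpace ℝ (Fin d)) r,
          (EuclideanSpace.equiv (Fin d) ℝ z i) * (EuclideanSpace.equiv (Fin d) ℝ z j) ∂ν) →
      ∀ φ : EuclideanSpace ℝ (Fin d) → ℝ, ContDiff ℝ 3 φ →
      ∀ M3 : ℝ, (∀ x, ‖iteratedFDeriv ℝ 3 φ x‖ ≤ M3) →
      ∀ x : EuclideanSpace ℝ (Fin d),
        |(∫ z in ball (0 : EuclideanSpace ℝ (Fin d)) r,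
            (φ (x + z) - φ x - fderiv ℝ φ x z) ∂ν)
          - Matrix.trace (σr.transpose *
              (Matrix.of fun i j : Fin d =>
                iteratedFDeriv ℝ 2 φ x
                  ![EuclideanSpace.single i (1 : ℝ), EuclideanSpace.single j (1 : ℝ)]) * σr)|
          ≤ K * r ^ (3 - σ) * M3 :=
  stmt2_general d ν C σ hC hσ2 hdens
end

section
/- Under the assumptions of the small-jump approximation lemma, if additionally φ ∈ C_b⁴(ℝ^d) and ν is symmetric (ν(−A) = ν(A) for all Borel A), then |L_r φ(x) − tr(σ_r^T D²φ(x) σ_r)| ≤ K r^{4-σ} ‖D⁴φ‖_∞. -/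
/-!
Since `ν` is symmetric, `∫_{B_r} (φ (x + z) - φ x - Dφ x z) dν` is half the integral of the
central difference `φ (x + z) + φ (x - z) - 2 φ x`, and the covariance condition on `σ_r` turns
the trace into `1/2 ∫_{B_r} D²φ x (z, z) dν`. The difference is therefore
`1/2 ∫_{B_r} (φ (x + z) + φ (x - z) - 2 φ x - D²φ x (z, z)) dν`, whose integrand is at most
`‖D⁴φ‖_∞ ‖z‖⁴ / 3` by Taylor's theorem at order 3, the odd terms cancelling. Polar coordinates and
the density bound give `∫_{B_r} ‖z‖^p dν ≤ c_p r^(p - σ)` for `p > σ`: with `p = 4` this is the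
rate, and with `p = 2` it makes every integrand integrable.
-/

open MeasureTheory Metric Set Matrix

section Taylor
variable {E F : Type*} [NormedAddCommGroup E] [NormedSpace ℝ E]
  [NormedAddCommGroup F] [NormedSpace ℝ F]

theorem iteratedDeriv_comp_add_smul {φ : E → F} {N : WithTop ℕ∞} (hφ : ContDiff ℝ N φ)
    {n : ℕ} (hn : n ≤ N) (x v : E) (t : ℝ) :
    iteratedDeriv n (fun s : ℝ => φ (x + s • v)) t
      = iteratedFDeriv ℝ n φ (x + t • v) (fun _ => v) := by
  have hshift : ContDiff ℝ N fun w => φ (x + w) := hφ.comp (contDiff_const.add contDiff_id)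
  have hline : (fun s : ℝ => φ (x + s • v))
      = (fun w => φ (x + w)) ∘ ((1 : ℝ →L[ℝ] ℝ).smulRight v) := by
    funext s; simp
  rw [iteratedDeriv_eq_iteratedFDeriv, hline,
    ContinuousLinearMap.iteratedFDeriv_comp_right _ hshift _ hn,
    ContinuousMultilinearMap.compContinuousLinearMap_apply, iteratedFDeriv_comp_add_left]
  simp

theorem norm_sub_sum_iteratedFDeriv_le {φ : E → F} {n : ℕ} (hφ : ContDiff ℝ (n + 1) φ)
    {M : ℝ} (x z : E) (hM : ∀ t ∈ Icc (0 : ℝ) 1, ‖iteratedFDeriv ℝ (n + 1) φ (x + t • z)‖ ≤ M) :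
    ‖φ (x + z) - ∑ k ∈ Finset.range (n + 1),
        (k.factorial : ℝ)⁻¹ • iteratedFDeriv ℝ k φ x (fun _ => z)‖
      ≤ M * ‖z‖ ^ (n + 1) / n.factorial := by
  set g : ℝ → F := fun t => φ (x + t • z)
  have hg : ContDiff ℝ (n + 1) g :=
    hφ.comp (contDiff_const.add (contDiff_id.smul contDiff_const))
  have hderiv : ∀ k ≤ n + 1, ∀ t ∈ Icc (0 : ℝ) 1, iteratedDerivWithin k g (Icc 0 1) t
      = iteratedFDeriv ℝ k φ (x + t • z) (fun _ => z) := fun k hk t ht => by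
    rw [iteratedDerivWithin_eq_iteratedDeriv (uniqueDiffOn_Icc one_pos)
      (hg.contDiffAt.of_le (by exact_mod_cast hk)) ht,
      iteratedDeriv_comp_add_smul hφ (by exact_mod_cast hk)]
  have hbound : ∀ t ∈ Icc (0 : ℝ) 1,
      ‖iteratedDerivWithin (n + 1) g (Icc 0 1) t‖ ≤ M * ‖z‖ ^ (n + 1) := fun t ht => by
    rw [hderiv _ le_rfl t ht]
    exact ((iteratedFDeriv ℝ (n + 1) φ (x + t • z)).le_opNorm_mul_pow_of_le
      (pi_norm_const_le z)).trans (by gcongr; exact hM t ht)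
  have htaylor : taylorWithinEval g n (Icc 0 1) 0 1 = ∑ k ∈ Finset.range (n + 1),
      (k.factorial : ℝ)⁻¹ • iteratedFDeriv ℝ k φ x (fun _ => z) := by
    rw [taylor_within_apply]
    refine Finset.sum_congr rfl fun k hk => ?_
    rw [hderiv k (by simp at hk; omega) 0 (left_mem_Icc.2 zero_le_one)]
    simp
  simpa [g, htaylor] using taylor_mean_remainder_bound zero_le_one
    (by exact_mod_cast hg.contDiffOn) (right_mem_Icc.2 zero_le_one) hbound

theorem norm_sub_sub_fderiv_le {φ : E → F} (hφ : ContDiff ℝ 2 φ) {M : ℝ} (x z : E)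
    (hM : ∀ t ∈ Icc (0 : ℝ) 1, ‖iteratedFDeriv ℝ 2 φ (x + t • z)‖ ≤ M) :
    ‖φ (x + z) - φ x - fderiv ℝ φ x z‖ ≤ M * ‖z‖ ^ 2 := by
  simpa [Finset.sum_range_succ, iteratedFDeriv_one_apply, sub_sub] using
    norm_sub_sum_iteratedFDeriv_le (n := 1) hφ x z hM

theorem norm_add_add_sub_sub_iteratedFDeriv_two_le {φ : E → F} (hφ : ContDiff ℝ 4 φ) {M : ℝ}
    (hM : ∀ y, ‖iteratedFDeriv ℝ 4 φ y‖ ≤ M) (x z : E) :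
    ‖φ (x + z) + φ (x - z) - (2 : ℝ) • φ x - iteratedFDeriv ℝ 2 φ x (fun _ => z)‖
      ≤ M / 3 * ‖z‖ ^ 4 := by
  have taylor (w : E) := norm_sub_sum_iteratedFDeriv_le (n := 3) hφ x w fun t _ => hM _
  have hneg (k : ℕ) : iteratedFDeriv ℝ k φ x (fun _ => -z)
      = (-1 : ℝ) ^ k • iteratedFDeriv ℝ k φ x (fun _ => z) := by
    simpa using (iteratedFDeriv ℝ k φ x).map_smul_univ (fun _ => (-1 : ℝ)) (fun _ => z)
  have hsplit : φ (x + z) + φ (x - z) - (2 : ℝ) • φ x - iteratedFDeriv ℝ 2 φ x (fun _ => z)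
      = (φ (x + z) - ∑ k ∈ Finset.range 4,
            (k.factorial : ℝ)⁻¹ • iteratedFDeriv ℝ k φ x (fun _ => z))
        + (φ (x + -z) - ∑ k ∈ Finset.range 4,
            (k.factorial : ℝ)⁻¹ • iteratedFDeriv ℝ k φ x (fun _ => -z)) := by
    simp only [Finset.sum_range_succ, Finset.sum_range_zero, hneg, ← sub_eq_add_neg]
    norm_num
    module
  calc _ ≤ M * ‖z‖ ^ 4 / (Nat.factorial 3) + M * ‖-z‖ ^ 4 / (Nat.factorial 3) :=
        hsplit ▸ norm_add_le_of_le (taylor z) (taylor (-z))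
    _ = M / 3 * ‖z‖ ^ 4 := by norm_num [Nat.factorial]; ring

end Taylor

section Moments
variable {E : Type*} [NormedAddCommGroup E] [NormedSpace ℝ E] [FiniteDimensional ℝ E]
  [MeasurableSpace E] [BorelSpace E] (μ : Measure E) [μ.IsAddHaarMeasure]

theorem lintegral_ball_norm_rpow {p r : ℝ} (hp : -(Module.finrank ℝ E : ℝ) < p) (hr : 0 ≤ r) :
    ∫⁻ x in ball (0 : E) r, ENNReal.ofReal (‖x‖ ^ p) ∂μ
      = ENNReal.ofReal (Module.finrank ℝ E * μ.real (ball 0 1) / (p + Module.finrank ℝ E)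
          * r ^ (p + Module.finrank ℝ E)) := by
  set n := Module.finrank ℝ E
  rcases subsingleton_or_nontrivial E with hE | hE
  · have hn : n = 0 := Module.finrank_zero_of_subsingleton
    have hp0 : p ≠ 0 := by simp only [hn, CharP.cast_eq_zero, neg_zero] at hp; exact hp.ne'
    simp [hn, Subsingleton.elim _ (0 : E), Real.zero_rpow hp0]
  have hn : 0 < n := Module.finrank_pos
  have hradial : EqOn (fun y : ℝ => y ^ (n - 1) • y ^ p) (fun y => y ^ (p + n - 1)) (Ioo 0 r) :=
    fun y hy => by
      dsimp only
      rw [smul_eq_mul, ← Real.rpow_natCast, ← Real.rpow_add hy.1, Nat.cast_sub hn]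
      ring_nf
  have hint : IntegrableOn (fun x : E => ‖x‖ ^ p) (ball 0 r) μ := by
    rw [integrableOn_fun_norm_addHaar μ (f := fun y => y ^ p),
      integrableOn_congr_fun hradial measurableSet_Ioo]
    exact (intervalIntegrable_iff_integrableOn_Ioo_of_le hr).1
      (intervalIntegral.intervalIntegrable_rpow' (by linarith))
  rw [← ofReal_integral_eq_lintegral_ofReal hint (ae_of_all _ fun x => by positivity)]
  have hind : (ball (0 : E) r).indicator (fun x => ‖x‖ ^ p)
      = fun x => (Iio r).indicator (fun y : ℝ => y ^ p) ‖x‖ := by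
    ext x; simp [indicator]
  have hsmul : (fun y : ℝ => y ^ (n - 1) • (Iio r).indicator (fun y : ℝ => y ^ p) y)
      = (Iio r).indicator (fun y => y ^ (n - 1) • y ^ p) := by
    ext y; simp [indicator]
  rw [← integral_indicator measurableSet_ball, hind, integral_fun_norm_addHaar, hsmul,
    setIntegral_indicator measurableSet_Iio, Ioi_inter_Iio,
    setIntegral_congr_fun measurableSet_Ioo hradial, ← integral_Ioc_eq_integral_Ioo,
    ← intervalIntegral.integral_of_le hr, integral_rpow (Or.inl (by linarith)),
    Real.zero_rpow (by linarith)]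
  simp only [nsmul_eq_mul, smul_eq_mul, n]
  ring_nf

variable {μ} {ν : Measure E} {C σ : ℝ}
  (hdens : ∀ A, MeasurableSet A → A ⊆ ball 0 1 →
    ν A ≤ ∫⁻ z in A, ENNReal.ofReal (C / ‖z‖ ^ ((Module.finrank ℝ E : ℝ) + σ)) ∂μ)
include hdens

theorem lintegral_ball_norm_pow_le_of_le_density (hC : 0 ≤ C) {p : ℕ} (hp0 : p ≠ 0)
    (hp : σ < p) {r : ℝ} (hr0 : 0 ≤ r) (hr1 : r ≤ 1) :
    ∫⁻ z in ball (0 : E) r, ENNReal.ofReal (‖z‖ ^ p) ∂ν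
      ≤ ENNReal.ofReal (C * (Module.finrank ℝ E * μ.real (ball 0 1) / (p - σ)) * r ^ (p - σ)) := by
  set n : ℝ := (Module.finrank ℝ E : ℝ)
  set g : E → ENNReal := fun z => ENNReal.ofReal (C / ‖z‖ ^ (n + σ))
  have hg : Measurable g := (measurable_const.div (measurable_norm.pow_const _)).ennreal_ofReal
  have hle : ν.restrict (ball 0 r) ≤ (μ.withDensity g).restrict (ball 0 r) := by
    refine Measure.le_iff.2 fun s hs => ?_
    rw [Measure.restrict_apply hs, Measure.restrict_apply hs,
      withDensity_apply g (hs.inter measurableSet_ball)]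
    exact hdens _ (hs.inter measurableSet_ball) (inter_subset_right.trans (ball_subset_ball hr1))
  have hpointwise (z : E) :
      g z * ENNReal.ofReal (‖z‖ ^ p) ≤ ENNReal.ofReal C * ENNReal.ofReal (‖z‖ ^ (p - n - σ)) := by
    rcases eq_or_ne z 0 with rfl | hz
    · simp [hp0]
    have hz : 0 < ‖z‖ := norm_pos_iff.2 hz
    rw [← ENNReal.ofReal_mul (by positivity), ← ENNReal.ofReal_mul hC, ← Real.rpow_natCast,
      div_mul_eq_mul_div, mul_div_assoc, ← Real.rpow_sub hz, sub_sub]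
  calc ∫⁻ z in ball (0 : E) r, ENNReal.ofReal (‖z‖ ^ p) ∂ν
      ≤ ∫⁻ z in ball (0 : E) r, ENNReal.ofReal (‖z‖ ^ p) ∂μ.withDensity g :=
        lintegral_mono' hle le_rfl
    _ = ∫⁻ z in ball (0 : E) r, g z * ENNReal.ofReal (‖z‖ ^ p) ∂μ := by
      rw [restrict_withDensity measurableSet_ball, lintegral_withDensity_eq_lintegral_mul _ hg
        (by fun_prop)]
      rfl
    _ ≤ ∫⁻ z in ball (0 : E) r, ENNReal.ofReal C * ENNReal.ofReal (‖z‖ ^ (p - n - σ)) ∂μ :=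
      lintegral_mono hpointwise
    _ = _ := by
      rw [lintegral_const_mul' _ _ ENNReal.ofReal_ne_top,
        lintegral_ball_norm_rpow μ (by linarith) hr0, ← ENNReal.ofReal_mul hC]
      simp only [n]
      ring_nf

theorem integrableOn_ball_norm_pow_of_le_density (hC : 0 ≤ C) {p : ℕ} (hp0 : p ≠ 0)
    (hp : σ < p) {r : ℝ} (hr0 : 0 ≤ r) (hr1 : r ≤ 1) :
    IntegrableOn (fun z => ‖z‖ ^ p) (ball (0 : E) r) ν := by
  refine ⟨by fun_prop, ?_⟩
  rw [hasFiniteIntegral_iff_ofReal (ae_of_all _ fun z => by positivity)]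
  exact (lintegral_ball_norm_pow_le_of_le_density hdens hC hp0 hp hr0 hr1).trans_lt
    ENNReal.ofReal_lt_top

theorem setIntegral_ball_norm_pow_le_of_le_density (hC : 0 ≤ C) {p : ℕ} (hp0 : p ≠ 0)
    (hp : σ < p) {r : ℝ} (hr0 : 0 ≤ r) (hr1 : r ≤ 1) :
    ∫ z in ball (0 : E) r, ‖z‖ ^ p ∂ν
      ≤ C * (Module.finrank ℝ E * μ.real (ball 0 1) / (p - σ)) * r ^ (p - σ) := by
  have hpσ : 0 < p - σ := sub_pos.2 hp
  rw [integral_eq_lintegral_of_nonneg_ae (ae_of_all _ fun z => by positivity) (by fun_prop)]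
  exact ENNReal.toReal_le_of_le_ofReal (by positivity)
    (lintegral_ball_norm_pow_le_of_le_density hdens hC hp0 hp hr0 hr1)

end Moments

section Covariance
variable {d : ℕ}

theorem continuousMultilinearMap_apply_const_eq_sum_single
    (F : ContinuousMultilinearMap ℝ (fun _ : Fin 2 => EuclideanSpace ℝ (Fin d)) ℝ)
    (z : EuclideanSpace ℝ (Fin d)) :
    F (fun _ => z) = ∑ i, ∑ j, z i * z j *
      F ![EuclideanSpace.single i (1 : ℝ), EuclideanSpace.single j (1 : ℝ)] := by
  set e : Fin d → EuclideanSpace ℝ (Fin d) := fun i => EuclideanSpace.single i 1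
  have hz : (fun _ : Fin 2 => z) = fun _ => ∑ i, z i • e i := by
    funext; simpa [e] using ((EuclideanSpace.basisFun (Fin d) ℝ).sum_repr z).symm
  have hterm (r : Fin 2 → Fin d) :
      F (fun k => z (r k) • e (r k)) = z (r 0) * z (r 1) * F ![e (r 0), e (r 1)] := by
    rw [F.map_smul_univ, Fin.prod_univ_two, smul_eq_mul]
    congr 2
    funext k; fin_cases k <;> rfl
  rw [hz, F.map_sum, ← (piFinTwoEquiv fun _ => Fin d).symm.sum_comp, Fintype.sum_prod_type]
  simp only [hterm]
  rfl

theorem integrable_coord_mul_coord {μ : Measure (EuclideanSpace ℝ (Fin d))}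
    (hμ : Integrable (fun z => ‖z‖ ^ 2) μ) (i j : Fin d) :
    Integrable (fun z : EuclideanSpace ℝ (Fin d) => z i * z j) μ := by
  refine hμ.mono' (by fun_prop) (ae_of_all _ fun z => ?_)
  rw [norm_mul, sq]
  exact mul_le_mul (PiLp.norm_apply_le z i) (PiLp.norm_apply_le z j) (norm_nonneg _)
    (norm_nonneg _)

theorem trace_transpose_mul_mul_eq_half_integral {μ : Measure (EuclideanSpace ℝ (Fin d))}
    (hμ : Integrable (fun z => ‖z‖ ^ 2) μ) (S : Matrix (Fin d) (Fin d) ℝ)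
    (hS : ∀ i j, (S * Sᵀ) i j = 1 / 2 * ∫ z, z i * z j ∂μ)
    (F : ContinuousMultilinearMap ℝ (fun _ : Fin 2 => EuclideanSpace ℝ (Fin d)) ℝ) :
    trace (Sᵀ * (of fun i j => F ![EuclideanSpace.single i (1 : ℝ), EuclideanSpace.single j 1])
        * S) = 1 / 2 * ∫ z, F (fun _ => z) ∂μ := by
  generalize hA : (of fun i j => F ![EuclideanSpace.single i (1 : ℝ), EuclideanSpace.single j 1])
    = A
  have hFA (i j : Fin d) :
      F ![EuclideanSpace.single i (1 : ℝ), EuclideanSpace.single j 1] = A i j := by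
    simp [← hA]
  have hint (i j : Fin d) : Integrable (fun z : EuclideanSpace ℝ (Fin d) => z i * z j * A i j) μ :=
    (integrable_coord_mul_coord hμ i j).mul_const _
  calc trace (Sᵀ * A * S) = trace (A * (S * Sᵀ)) := by
        rw [Matrix.mul_assoc, trace_mul_comm, Matrix.mul_assoc]
    _ = ∑ i, ∑ j, A i j * (S * Sᵀ) j i := rfl
    _ = ∑ i, ∑ j, 1 / 2 * ∫ z, z i * z j * A i j ∂μ := by
      refine Finset.sum_congr rfl fun i _ => Finset.sum_congr rfl fun j _ => ?_
      rw [hS, integral_mul_const,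
        integral_congr_ae (ae_of_all μ fun z => mul_comm (z j) (z i))]
      ring
    _ = 1 / 2 * ∫ z, ∑ i, ∑ j, z i * z j * A i j ∂μ := by
      simp_rw [integral_finsetSum _ fun i _ => integrable_finsetSum _ fun j _ => hint i j,
        integral_finsetSum _ fun j _ => hint _ j, Finset.mul_sum]
    _ = 1 / 2 * ∫ z, F (fun _ => z) ∂μ := by
      simp_rw [continuousMultilinearMap_apply_const_eq_sum_single F, hFA]

end Covariance

section Symmetric
variable {E : Type*} [NormedAddCommGroup E] [MeasurableSpace E] [BorelSpace E]

theorem isNegInvariant_restrict_ball (ν : Measure E) [ν.IsNegInvariant] (r : ℝ) :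
    (ν.restrict (ball 0 r)).IsNegInvariant := by
  have hball : Neg.neg ⁻¹' ball (0 : E) r = ball 0 r := by
    rw [Set.neg_preimage, neg_ball, neg_zero]
  refine ⟨?_⟩
  conv_lhs => rw [Measure.neg, ← hball, ← Measure.restrict_map measurable_neg measurableSet_ball,
    Measure.map_neg_eq_self]

end Symmetric

theorem integrable_sub_sub_fderiv {E F : Type*} [NormedAddCommGroup E] [NormedSpace ℝ E]
    [ProperSpace E] [MeasurableSpace E] [BorelSpace E] [NormedAddCommGroup F] [NormedSpace ℝ F]
    {μ : Measure E} (hμ : Integrable (fun z => ‖z‖ ^ 2) μ) (hsupp : ∀ᵐ z ∂μ, ‖z‖ ≤ 1)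
    {φ : E → F} (hφ : ContDiff ℝ 2 φ) (x : E) :
    Integrable (fun z => φ (x + z) - φ x - fderiv ℝ φ x z) μ := by
  obtain ⟨M, hM⟩ := (isCompact_closedBall x 1).exists_bound_of_continuousOn
    (hφ.continuous_iteratedFDeriv le_rfl).continuousOn
  refine (hμ.const_mul M).mono' (by fun_prop) (hsupp.mono fun z hz => ?_)
  refine norm_sub_sub_fderiv_le hφ x z fun t ht => hM _ ?_
  rw [mem_closedBall, dist_self_add_left, norm_smul, Real.norm_of_nonneg ht.1]
  exact mul_le_one₀ ht.2 (norm_nonneg z) hz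

theorem abs_integral_sub_trace_le {d : ℕ} {μ : Measure (EuclideanSpace ℝ (Fin d))}
    [μ.IsNegInvariant] (hμ : Integrable (fun z => ‖z‖ ^ 2) μ) (hsupp : ∀ᵐ z ∂μ, ‖z‖ ≤ 1)
    (S : Matrix (Fin d) (Fin d) ℝ) (hS : ∀ i j, (S * Sᵀ) i j = 1 / 2 * ∫ z, z i * z j ∂μ)
    {φ : EuclideanSpace ℝ (Fin d) → ℝ} (hφ : ContDiff ℝ 4 φ) {M : ℝ}
    (hM : ∀ y, ‖iteratedFDeriv ℝ 4 φ y‖ ≤ M) (x : EuclideanSpace ℝ (Fin d)) :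
    |∫ z, (φ (x + z) - φ x - fderiv ℝ φ x z) ∂μ
        - trace (Sᵀ * (of fun i j => iteratedFDeriv ℝ 2 φ x
            ![EuclideanSpace.single i (1 : ℝ), EuclideanSpace.single j 1]) * S)|
      ≤ M / 6 * ∫ z, ‖z‖ ^ 4 ∂μ := by
  set f := fun z => φ (x + z) - φ x - fderiv ℝ φ x z
  set Q := fun z => iteratedFDeriv ℝ 2 φ x (fun _ => z)
  have hf : Integrable f μ := integrable_sub_sub_fderiv hμ hsupp (hφ.of_le (by norm_num)) x
  have hQ : Integrable Q μ := (hμ.const_mul ‖iteratedFDeriv ℝ 2 φ x‖).mono' (by fun_prop)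
    (ae_of_all _ fun z => (iteratedFDeriv ℝ 2 φ x).le_opNorm_mul_pow_of_le (pi_norm_const_le z))
  have h4 : Integrable (fun z => ‖z‖ ^ 4) μ := hμ.mono' (by fun_prop) (hsupp.mono fun z hz => by
    rw [Real.norm_of_nonneg (by positivity)]
    exact pow_le_pow_of_le_one (norm_nonneg z) hz (by norm_num))
  have hsymm : ∫ z, f z ∂μ - 1 / 2 * ∫ z, Q z ∂μ = 1 / 2 * ∫ z, (f z + f (-z) - Q z) ∂μ := by
    have hf' : Integrable (fun z => f z + f (-z)) μ := hf.add hf.comp_neg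
    rw [integral_sub hf' hQ, integral_add hf hf.comp_neg, integral_neg_eq_self f μ]
    ring
  have hpointwise (z) : ‖f z + f (-z) - Q z‖ ≤ M / 3 * ‖z‖ ^ 4 := by
    have hcentral : f z + f (-z) - Q z = φ (x + z) + φ (x - z) - (2 : ℝ) • φ x - Q z := by
      simp only [f, map_neg, smul_eq_mul, ← sub_eq_add_neg]
      ring
    rw [hcentral]
    exact norm_add_add_sub_sub_iteratedFDeriv_two_le hφ hM x z
  rw [trace_transpose_mul_mul_eq_half_integral hμ S hS, hsymm, abs_mul, abs_of_pos one_half_pos,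
    ← Real.norm_eq_abs]
  calc 1 / 2 * ‖∫ z, (f z + f (-z) - Q z) ∂μ‖ ≤ 1 / 2 * ∫ z, M / 3 * ‖z‖ ^ 4 ∂μ := by
        gcongr
        exact norm_integral_le_of_norm_le (h4.const_mul _) (ae_of_all _ hpointwise)
    _ = M / 6 * ∫ z, ‖z‖ ^ 4 ∂μ := by rw [integral_const_mul]; ring

theorem stmt3_general (d : ℕ) (ν : Measure (EuclideanSpace ℝ (Fin d)))
    (C σ : ℝ) (hC : 0 < C) (hσ2 : σ < 2)
    (hdens : ∀ A : Set (EuclideanSpace ℝ (Fin d)), MeasurableSet A → A ⊆ ball 0 1 →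
      ν A ≤ ∫⁻ z in A, ENNReal.ofReal (C / ‖z‖ ^ ((d : ℝ) + σ)) ∂volume)
    (hsymm : ν.map (fun z => -z) = ν) :
    ∃ K : ℝ, 0 < K ∧ ∀ r : ℝ, r ∈ Ioo (0 : ℝ) 1 →
      ∀ σr : Matrix (Fin d) (Fin d) ℝ,
      (∀ i j : Fin d, (σr * σr.transpose) i j =
        (1 / 2) * ∫ z in ball (0 : EuclideanSpace ℝ (Fin d)) r,
          (EuclideanSpace.equiv (Fin d) ℝ z i) * (EuclideanSpace.equiv (Fin d) ℝ z j) ∂ν) →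
      ∀ φ : EuclideanSpace ℝ (Fin d) → ℝ, ContDiff ℝ 4 φ →
      ∀ M4 : ℝ, (∀ x, ‖iteratedFDeriv ℝ 4 φ x‖ ≤ M4) →
      ∀ x : EuclideanSpace ℝ (Fin d),
        |(∫ z in ball (0 : EuclideanSpace ℝ (Fin d)) r,
            (φ (x + z) - φ x - fderiv ℝ φ x z) ∂ν)
          - Matrix.trace (σr.transpose *
              (Matrix.of fun i j : Fin d =>
                iteratedFDeriv ℝ 2 φ x
                  ![EuclideanSpace.single i (1 : ℝ), EuclideanSpace.single j (1 : ℝ)]) * σr)|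
          ≤ K * r ^ (4 - σ) * M4 := by
  set c := C * (d * volume.real (ball (0 : EuclideanSpace ℝ (Fin d)) 1) / (4 - σ))
  have hc : 0 ≤ c := mul_nonneg hC.le (div_nonneg (by positivity) (by linarith))
  refine ⟨c / 6 + 1, by positivity, fun r hr S hS φ hφ M hM x => ?_⟩
  have hdens' : ∀ A, MeasurableSet A → A ⊆ ball 0 1 → ν A ≤ ∫⁻ z in A,
      ENNReal.ofReal (C / ‖z‖ ^ ((Module.finrank ℝ (EuclideanSpace ℝ (Fin d)) : ℝ) + σ)) := by
    simpa only [finrank_euclideanSpace_fin] using hdens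
  have : ν.IsNegInvariant := ⟨hsymm⟩
  have := isNegInvariant_restrict_ball ν r
  have hsupp : ∀ᵐ z ∂ν.restrict (ball 0 r), ‖z‖ ≤ 1 :=
    ae_restrict_of_forall_mem measurableSet_ball fun z hz =>
      (mem_ball_zero_iff.1 hz).le.trans hr.2.le
  have h2 := integrableOn_ball_norm_pow_of_le_density hdens' hC.le two_ne_zero
    (by exact_mod_cast hσ2) hr.1.le hr.2.le
  have h4 := setIntegral_ball_norm_pow_le_of_le_density hdens' hC.le four_ne_zero
    (by push_cast; linarith) hr.1.le hr.2.le
  have hM0 : 0 ≤ M := (norm_nonneg _).trans (hM x)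
  have hr0 : 0 ≤ r ^ (4 - σ) := Real.rpow_nonneg hr.1.le _
  calc _ ≤ M / 6 * ∫ z in ball 0 r, ‖z‖ ^ 4 ∂ν :=
        abs_integral_sub_trace_le h2 hsupp S hS hφ hM x
    _ ≤ M / 6 * (c * r ^ (4 - σ)) := by gcongr; simpa [c] using h4
    _ ≤ (c / 6 + 1) * r ^ (4 - σ) * M := by nlinarith [mul_nonneg hr0 hM0]

/-- Small-jump approximation with symmetric Lévy measure and φ ∈ C_b⁴:
|L_r φ(x) − tr(σ_rᵀ D²φ(x) σ_r)| ≤ K r^{4-σ} ‖D⁴φ‖_∞. -/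
theorem stmt3 (d : ℕ) (ν : Measure (EuclideanSpace ℝ (Fin d)))
    (C σ : ℝ) (hC : 0 < C) (hσ1 : 0 < σ) (hσ2 : σ < 2)
    (hlevy : ∫⁻ z, ENNReal.ofReal (min 1 (‖z‖ ^ 2)) ∂ν < ⊤)
    (hdens : ∀ A : Set (EuclideanSpace ℝ (Fin d)), MeasurableSet A → A ⊆ ball 0 1 →
      ν A ≤ ∫⁻ z in A, ENNReal.ofReal (C / ‖z‖ ^ ((d : ℝ) + σ)) ∂volume)
    (hsymm : ν.map (fun z => -z) = ν) :
    ∃ K : ℝ, 0 < K ∧ ∀ r : ℝ, r ∈ Ioo (0 : ℝ) 1 →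
      ∀ σr : Matrix (Fin d) (Fin d) ℝ,
      (∀ i j : Fin d, (σr * σr.transpose) i j =
        (1 / 2) * ∫ z in ball (0 : EuclideanSpace ℝ (Fin d)) r,
          (EuclideanSpace.equiv (Fin d) ℝ z i) * (EuclideanSpace.equiv (Fin d) ℝ z j) ∂ν) →
      ∀ φ : EuclideanSpace ℝ (Fin d) → ℝ, ContDiff ℝ 4 φ →
      ∀ M4 : ℝ, (∀ x, ‖iteratedFDeriv ℝ 4 φ x‖ ≤ M4) →
      ∀ x : EuclideanSpace ℝ (Fin d),
        |(∫ z in ball (0 : EuclideanSpace ℝ (Fin d)) r,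
            (φ (x + z) - φ x - fderiv ℝ φ x z) ∂ν)
          - Matrix.trace (σr.transpose *
              (Matrix.of fun i j : Fin d =>
                iteratedFDeriv ℝ 2 φ x
                  ![EuclideanSpace.single i (1 : ℝ), EuclideanSpace.single j (1 : ℝ)]) * σr)|
          ≤ K * r ^ (4 - σ) * M4 :=
  stmt3_general d ν C σ hC hσ2 hdens hsymm
end

section
/- Let d = 1, ρ > 0, β_i the hat basis functions on the grid x_i = iρ, and let (Φ_j)_{j∈ℤ} ⊂ ℝ satisfy |Φ_j − Φ_i| ≥ √(1 − c₀h) ρ |j−i| for all i, j, with c₀h < 1 small enough that √(1−c₀h) > 2/3. Then for every i ∈ ℤ, ∑_{j∈ℤ} β_i(Φ_j) ≤ 1 + K₀ h, where K₀ depends only on c₀ (one may take 3 − 2√(1−c₀h) ≤ 1 + K₀h). -/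
/-!
Put `g j = 1 - |Φ j - iρ| / ρ`, so the summands are `max 0 (g j)`. The separation hypothesis
and the triangle inequality through `iρ` give `g j + g j' ≤ 2 - s |j - j'|` with
`s = √(1 - c₀h)`. Since `s > 2/3`, at most three consecutive indices have `g j > 0`; on such
a window the two outer terms add up to at most `2 - 2s` and the middle one is at most `1`,
so the sum is at most `3 - 2s ≤ 1 + 2c₀h`.
-/

open Finset

lemma Real.self_le_sqrt_of_le_one {x : ℝ} (hx : x ≤ 1) : x ≤ √x := by
  rcases le_total x 0 with hx0 | hx0
  · exact hx0.trans (Real.sqrt_nonneg x)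
  · exact (Real.le_sqrt hx0 hx0).2 (by nlinarith)

section PairwiseBound

variable {g : ℤ → ℝ} {s : ℝ}

lemma abs_sub_le_two_of_pos (hs : 2 / 3 < s)
    (hg : ∀ j j' : ℤ, g j + g j' ≤ 2 - s * |(j : ℝ) - j'|) {j j' : ℤ}
    (hj : 0 < g j) (hj' : 0 < g j') : |j - j'| ≤ 2 := by
  have hlt : s * |(j : ℝ) - j'| < s * 3 := by linarith [hg j j']
  have : |((j - j' : ℤ) : ℝ)| < 3 := by
    push_cast
    exact lt_of_mul_lt_mul_left hlt (by linarith)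
  have : |j - j'| < 3 := by exact_mod_cast this
  omega

lemma max_zero_add_max_zero_add_max_zero_le (hs1 : s ≤ 1)
    (hg : ∀ j j' : ℤ, g j + g j' ≤ 2 - s * |(j : ℝ) - j'|) (a : ℤ) :
    max 0 (g a) + max 0 (g (a + 1)) + max 0 (g (a + 2)) ≤ 3 - 2 * s := by
  have h₀ := hg a a
  have h₁ := hg (a + 1) (a + 1)
  have h₂ := hg (a + 2) (a + 2)
  have h₀₁ := hg a (a + 1)
  have h₁₂ := hg (a + 1) (a + 2)
  have h₀₂ := hg a (a + 2)
  push_cast at h₀ h₁ h₂ h₀₁ h₁₂ h₀₂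
  norm_num at h₀ h₁ h₂ h₀₁ h₁₂ h₀₂
  rcases le_total 0 (g a) with ha | ha <;>
  rcases le_total 0 (g (a + 1)) with hb | hb <;>
  rcases le_total 0 (g (a + 2)) with hc | hc <;>
  simp only [max_eq_left, max_eq_right, ha, hb, hc] <;> linarith

theorem tsum_max_zero_le (hs : 2 / 3 < s) (hs1 : s ≤ 1)
    (hg : ∀ j j' : ℤ, g j + g j' ≤ 2 - s * |(j : ℝ) - j'|) :
    ∑' j, max 0 (g j) ≤ 3 - 2 * s := by
  by_cases hpos : ∃ j, 0 < g j
  swap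
  · push Not at hpos
    simp only [max_eq_left (hpos _), tsum_zero]
    linarith
  obtain ⟨j₀, hj₀⟩ := hpos
  obtain ⟨a, ha, ha_least⟩ := Int.exists_least_of_bdd (P := fun j ↦ 0 < g j)
    ⟨j₀ - 2, fun j hj ↦ by have := abs_le.1 (abs_sub_le_two_of_pos hs hg hj hj₀); omega⟩ ⟨j₀, hj₀⟩
  have hwindow : ∑' j, max 0 (g j) = ∑ j ∈ {a, a + 1, a + 2}, max 0 (g j) := by
    refine tsum_eq_sum fun j hj ↦ max_eq_left (not_lt.1 fun hj_pos ↦ hj ?_)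
    have := ha_least j hj_pos
    have := abs_le.1 (abs_sub_le_two_of_pos hs hg hj_pos ha)
    simp only [mem_insert, mem_singleton]
    omega
  rw [hwindow, sum_insert (by simp), sum_insert (by simp), sum_singleton, ← add_assoc]
  exact max_zero_add_max_zero_add_max_zero_le hs1 hg a

end PairwiseBound

lemma hat_add_hat_le {Φ : ℤ → ℝ} {s ρ : ℝ} (hρ : 0 < ρ)
    (hsep : ∀ i j : ℤ, s * ρ * |(j : ℝ) - i| ≤ |Φ j - Φ i|) (x : ℝ) (j j' : ℤ) :
    (1 - |Φ j - x| / ρ) + (1 - |Φ j' - x| / ρ) ≤ 2 - s * |(j : ℝ) - j'| := by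
  have htri : |Φ j - Φ j'| ≤ |Φ j - x| + |Φ j' - x| := by
    simpa only [Real.dist_eq] using dist_triangle_right (Φ j) (Φ j') x
  have : s * |(j : ℝ) - j'| ≤ (|Φ j - x| + |Φ j' - x|) / ρ := by
    rw [le_div_iff₀ hρ]
    linarith [hsep j' j]
  rw [add_div] at this
  linarith

/-- If the points Φ_j are separated, |Φ_j − Φ_i| ≥ √(1−c₀h) ρ |j−i|, with
√(1−c₀h) > 2/3, then for every i the sum of the hat function β_i(x) = max(0, 1 − |x − iρ|/ρ)
over the points Φ_j is at most 1 + K₀h, where K₀ > 0 depends only on c₀. -/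
theorem stmt8 (c₀ : ℝ) (hc : 0 < c₀) :
    ∃ K₀ : ℝ, 0 < K₀ ∧
    ∀ ρ h : ℝ, 0 < ρ → 0 < h → c₀ * h < 1 → 2 / 3 < Real.sqrt (1 - c₀ * h) →
    ∀ Φ : ℤ → ℝ,
    (∀ i j : ℤ, Real.sqrt (1 - c₀ * h) * ρ * |(j : ℝ) - (i : ℝ)| ≤ |Φ j - Φ i|) →
    ∀ i : ℤ, ∑' j : ℤ, max 0 (1 - |Φ j - (i : ℝ) * ρ| / ρ) ≤ 1 + K₀ * h := by
  refine ⟨2 * c₀, by positivity, fun ρ h hρ hh _ hs Φ hsep i ↦ ?_⟩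
  have hch : 0 ≤ c₀ * h := by positivity
  have hs1 : √(1 - c₀ * h) ≤ 1 := Real.sqrt_le_one.2 (by linarith)
  have hs_ge : 1 - c₀ * h ≤ √(1 - c₀ * h) := Real.self_le_sqrt_of_le_one (by linarith)
  calc ∑' j : ℤ, max 0 (1 - |Φ j - (i : ℝ) * ρ| / ρ)
      ≤ 3 - 2 * √(1 - c₀ * h) := tsum_max_zero_le hs hs1 (hat_add_hat_le hρ hsep _)
    _ ≤ 1 + 2 * c₀ * h := by linarith
end

section
/- Let H: ℝ×ℝ → ℝ be such that D_p H ∈ C¹ with |D_{pp}H(x,p)| + |D_{px}H(x,p)| ≤ C_R for |p| ≤ R, H convex in p, and let v: ℝ → ℝ be Lipschitz with constant ≤ R and satisfy the one-sided gradient bound (Dv(x_j) − Dv(x_i))(x_j − x_i) ≤ c₂|x_j − x_i|². Then (D_pH(x_j, Dv(x_j)) − D_pH(x_i, Dv(x_i)))(x_j − x_i) ≤ c₀|x_j − x_i|² with c₀ = C_R c₂ + C_R. -/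
/-!
Write `G x p = D_pH(x, p)` and `q = Dv`, so that `|q| ≤ R`. Split
`G(b, q b) - G(a, q a) = (G(b, q b) - G(b, q a)) + (G(b, q a) - G(a, q a))`.
The second difference is at most `C_R |b - a|` by the bound on `D_xG`. In the first,
`p ↦ G(b, p)` is monotone (convexity of `H b`) and `C_R`-Lipschitz on `[-R, R]`, so it equals
`λ (q b - q a)` with `0 ≤ λ ≤ C_R`; multiplying by `b - a` and using the one-sided bound on `q`
gives at most `C_R c₂ (b - a)²`.
-/

open Set

theorem LocallyLipschitz.locallyBoundedVariationOn {E : Type*} [PseudoMetricSpace E]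
    {f : ℝ → E} (hf : LocallyLipschitz f) (s : Set ℝ) : LocallyBoundedVariationOn f s := by
  intro a b _ _
  obtain ⟨K, hK⟩ := (hf.locallyLipschitzOn (s := Icc a b)).exists_lipschitzOnWith_of_compact
    isCompact_Icc
  exact (hK.comp_boundedVariationOn (mapsTo_id _) (BoundedVariationOn.id_Icc a b)).mono
    inter_subset_right

theorem ConvexOn.dense_setOf_differentiableAt {f : ℝ → ℝ} (hf : ConvexOn ℝ univ f) :
    Dense {x | DifferentiableAt ℝ f x} :=
  MeasureTheory.Measure.dense_of_ae <| LocallyBoundedVariationOn.ae_differentiableAt <|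
    (locallyLipschitzOn_univ.1 (hf.locallyLipschitzOn isOpen_univ)).locallyBoundedVariationOn univ

theorem Continuous.monotone_of_monotoneOn_dense {α β : Type*} [LinearOrder α]
    [TopologicalSpace α] [OrderTopology α] [DenselyOrdered α] [Preorder β] [TopologicalSpace β]
    [OrderClosedTopology β] {f : α → β} {s : Set α} (hf : Continuous f) (hs : Dense s)
    (hmono : MonotoneOn f s) : Monotone f := by
  intro p q hpq
  rcases hpq.lt_or_eq with hlt | rfl
  · obtain ⟨m, hpm, hmq⟩ := exists_between hlt
    have hp : p ∈ closure (Iio m ∩ s) := hs.open_subset_closure_inter isOpen_Iio hpm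
    have hq : q ∈ closure (Ioi m ∩ s) := hs.open_subset_closure_inter isOpen_Ioi hmq
    have hp_le : ∀ y ∈ Ioi m ∩ s, f p ≤ f y := fun y hy =>
      closure_minimal (fun x hx => hmono hx.2 hy.2 (hx.1.trans hy.1).le)
        (isClosed_le hf continuous_const) hp
    exact closure_minimal hp_le (isClosed_le continuous_const hf) hq
  · exact le_rfl

theorem ConvexOn.monotone_deriv {f : ℝ → ℝ} (hf : ConvexOn ℝ univ f)
    (hf' : Continuous (deriv f)) : Monotone (deriv f) := by
  -- `deriv f` is junk (`0`) where `f` is not differentiable, so monotonicity is only known on the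
  -- dense set of differentiability points and is then extended by continuity.
  refine hf'.monotone_of_monotoneOn_dense hf.dense_setOf_differentiableAt ?_
  intro x hx y hy hxy
  rcases hxy.lt_or_eq with hlt | rfl
  · exact (hf.deriv_le_slope trivial trivial hlt hx).trans
      (hf.slope_le_deriv trivial trivial hlt hy)
  · exact le_rfl

theorem Monotone.sub_mul_le_of_abs_sub_le {f : ℝ → ℝ} (hf : Monotone f) {C c p q t : ℝ}
    (hC : 0 ≤ C) (hc : 0 ≤ c) (hlip : |f q - f p| ≤ C * |q - p|)
    (h : (q - p) * t ≤ c * t ^ 2) : (f q - f p) * t ≤ C * c * t ^ 2 := by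
  wlog hpq : p ≤ q generalizing p q t
  · have := this (t := -t) (by rwa [abs_sub_comm, abs_sub_comm p]) (by linarith) (le_of_not_ge hpq)
    linarith
  have hd : 0 ≤ f q - f p ∧ f q - f p ≤ C * (q - p) := by
    refine ⟨sub_nonneg.2 (hf hpq), ?_⟩
    rwa [abs_of_nonneg (sub_nonneg.2 (hf hpq)), abs_of_nonneg (sub_nonneg.2 hpq)] at hlip
  rcases le_total 0 t with ht | ht
  · nlinarith [mul_le_mul_of_nonneg_right hd.2 ht, mul_le_mul_of_nonneg_left h hC]
  · nlinarith [mul_nonneg hd.1 (neg_nonneg.2 ht), mul_nonneg (mul_nonneg hC hc) (sq_nonneg t)]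

theorem sub_mul_le_of_abs_sub_le {u a b C : ℝ} (h : |u| ≤ C * |b - a|) :
    u * (b - a) ≤ C * (b - a) ^ 2 :=
  calc u * (b - a) ≤ |u| * |b - a| := by rw [← abs_mul]; exact le_abs_self _
    _ ≤ C * |b - a| * |b - a| := mul_le_mul_of_nonneg_right h (abs_nonneg _)
    _ = C * (b - a) ^ 2 := by rw [mul_assoc, ← sq, sq_abs]

theorem stmt16_general (H : ℝ → ℝ → ℝ) (R CR c₂ : ℝ) (hR : 0 < R) (hCR : 0 ≤ CR) (hc₂ : 0 ≤ c₂)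
    (hHp_C1 : ContDiff ℝ 1 (fun q : ℝ × ℝ => deriv (H q.1) q.2))
    (hbound : ∀ x p : ℝ, |p| ≤ R →
      |deriv (fun p' => deriv (H x) p') p| + |deriv (fun x' => deriv (H x') p) x| ≤ CR)
    (hconv : ∀ x : ℝ, ConvexOn ℝ Set.univ (H x))
    (v : ℝ → ℝ)
    (hv_lip : LipschitzWith (Real.toNNReal R) v)
    (hv_osl : ∀ a b : ℝ, (deriv v b - deriv v a) * (b - a) ≤ c₂ * (b - a) ^ 2) :
    ∀ a b : ℝ,
      (deriv (H b) (deriv v b) - deriv (H a) (deriv v a)) * (b - a)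
        ≤ (CR * c₂ + CR) * (b - a) ^ 2 := by
  intro a b
  have hG : Differentiable ℝ (fun q : ℝ × ℝ => deriv (H q.1) q.2) :=
    hHp_C1.differentiable one_ne_zero
  have hGp : ∀ x, Differentiable ℝ (deriv (H x)) := fun x =>
    hG.comp (f := fun p => (x, p)) (by fun_prop)
  have hGx : ∀ p, Differentiable ℝ (fun x => deriv (H x) p) := fun p =>
    hG.comp (f := fun x => (x, p)) (by fun_prop)
  have hDv : ∀ x, deriv v x ∈ Icc (-R) R := fun x =>
    abs_le.1 (by simpa [hR.le] using norm_deriv_le_of_lipschitz hv_lip (x₀ := x))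
  have hp_lip : |deriv (H b) (deriv v b) - deriv (H b) (deriv v a)|
      ≤ CR * |deriv v b - deriv v a| :=
    (convex_Icc (-R) R).norm_image_sub_le_of_norm_deriv_le
      (fun p _ => hGp b p)
      (fun p hp => (le_add_of_nonneg_right (abs_nonneg _)).trans (hbound b p (abs_le.2 hp)))
      (hDv a) (hDv b)
  have hx_lip : |deriv (H b) (deriv v a) - deriv (H a) (deriv v a)| ≤ CR * |b - a| :=
    convex_univ.norm_image_sub_le_of_norm_deriv_le
      (fun x _ => hGx _ x)
      (fun x _ => (le_add_of_nonneg_left (abs_nonneg _)).trans (hbound x _ (abs_le.2 (hDv a))))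
      (mem_univ a) (mem_univ b)
  have hp_mono : Monotone (deriv (H b)) := (hconv b).monotone_deriv (hGp b).continuous
  have hp_term := hp_mono.sub_mul_le_of_abs_sub_le hCR hc₂ hp_lip (hv_osl a b)
  have hx_term := sub_mul_le_of_abs_sub_le hx_lip
  linarith

/-- d = 1: One-sided Lipschitz bound for the composite drift
x ↦ D_pH(x, Dv(x)). If D_pH ∈ C¹ with |D_{pp}H| + |D_{px}H| ≤ C_R for |p| ≤ R, H is convex
in p, v is Lipschitz with constant ≤ R and satisfies the one-sided gradient bound
(Dv(b) − Dv(a))(b − a) ≤ c₂(b − a)², then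
(D_pH(b, Dv(b)) − D_pH(a, Dv(a)))(b − a) ≤ c₀(b − a)² with c₀ = C_R c₂ + C_R. -/
theorem stmt16 (H : ℝ → ℝ → ℝ) (R CR c₂ : ℝ) (hR : 0 < R) (hCR : 0 ≤ CR) (hc₂ : 0 ≤ c₂)
    (hHp_C1 : ContDiff ℝ 1 (fun q : ℝ × ℝ => deriv (H q.1) q.2))
    (hbound : ∀ x p : ℝ, |p| ≤ R →
      |deriv (fun p' => deriv (H x) p') p| + |deriv (fun x' => deriv (H x') p) x| ≤ CR)
    (hconv : ∀ x : ℝ, ConvexOn ℝ Set.univ (H x))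
    (v : ℝ → ℝ) (hv_diff : Differentiable ℝ v)
    (hv_lip : LipschitzWith (Real.toNNReal R) v)
    (hv_osl : ∀ a b : ℝ, (deriv v b - deriv v a) * (b - a) ≤ c₂ * (b - a) ^ 2) :
    ∀ a b : ℝ,
      (deriv (H b) (deriv v b) - deriv (H a) (deriv v a)) * (b - a)
        ≤ (CR * c₂ + CR) * (b - a) ^ 2 :=
  stmt16_general H R CR c₂ hR hCR hc₂ hHp_C1 hbound hconv v hv_lip hv_osl
end
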